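/- With D, D₁, D₂ as above, let F = cone D, F₁ = cone(D₁ ∪ D), F₂ = cone(D₂ ∪ D) in ℝ⁵. Then F₁ ∩ F₂ = F. -/

import Mathlib

/-- The convex conic hull of a set in `ℝ⁵`. -/
def coneHull (S : Set (EuclideanSpace ℝ (Fin 5))) : Set (EuclideanSpace ℝ (Fin 5)) :=
  {x | ∃ c : ℝ, 0 ≤ c ∧ ∃ y ∈ convexHull ℝ S, x = c • y}

/-- The disk `D = {(1,x,y,0,0) : x² + (y-1)² ≤ 1}`. -/
def diskD : Set (EuclideanSpace ℝ (Fin 5)) :=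
  {v | v 0 = 1 ∧ (v 1) ^ 2 + (v 2 - 1) ^ 2 ≤ 1 ∧ v 3 = 0 ∧ v 4 = 0}

/-- The set `D₁ = {(1,x,y,0,0) : x³ - (y-1)³ ≤ 1, x ≥ 0, 0 ≤ y ≤ 1}`. -/
def setD1 : Set (EuclideanSpace ℝ (Fin 5)) :=
  {v | v 0 = 1 ∧ (v 1) ^ 3 - (v 2 - 1) ^ 3 ≤ 1 ∧ 0 ≤ v 1 ∧ 0 ≤ v 2 ∧ v 2 ≤ 1 ∧
    v 3 = 0 ∧ v 4 = 0}

/-- The set `D₂ = {(1,x,y,0,0) : -x³ - (y-1)³ ≤ 1, x ≤ 0, 0 ≤ y ≤ 1}`. -/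
def setD2 : Set (EuclideanSpace ℝ (Fin 5)) :=
  {v | v 0 = 1 ∧ -(v 1) ^ 3 - (v 2 - 1) ^ 3 ≤ 1 ∧ v 1 ≤ 0 ∧ 0 ≤ v 2 ∧ v 2 ≤ 1 ∧
    v 3 = 0 ∧ v 4 = 0}

/-!
Points of `D₁` and `D₂` satisfy `0 ≤ y ≤ 1` and lie on one side of the plane `x = 0`. Hence a
tangent half-space `a x + b (y - 1) ≤ 1` (`a² + b² ≤ 1`) of the disk `D` also contains `D₁` when
`a ≤ 0`, and `D₂` when `a ≥ 0`; its homogenization `a x + b y ≤ (1 + b) l` then contains `F₁`,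
resp. `F₂`. So a point `(l, x, y, 0, 0)` of `F₁ ∩ F₂` satisfies `a x + b (y - l) ≤ l` for every
`(a, b)` in the unit disk, i.e. `√(x² + (y - l)²) ≤ l`, which describes `cone D`.
-/

local notation "ℝ⁵" => EuclideanSpace ℝ (Fin 5)

section coneHull

variable {S T : Set ℝ⁵}

theorem coneHull_mono (h : S ⊆ T) : coneHull S ⊆ coneHull T := by
  rintro _ ⟨c, hc, y, hy, rfl⟩
  exact ⟨c, hc, y, convexHull_mono h hy, rfl⟩

theorem smul_mem_coneHull {c : ℝ} (hc : 0 ≤ c) {v : ℝ⁵} (hv : v ∈ S) : c • v ∈ coneHull S :=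
  ⟨c, hc, v, subset_convexHull ℝ S hv, rfl⟩

theorem coneHull_subset_setOf_nonpos (f : ℝ⁵ →ₗ[ℝ] ℝ) (hS : S ⊆ {v | f v ≤ 0}) :
    coneHull S ⊆ {v | f v ≤ 0} := by
  rintro _ ⟨c, hc, y, hy, rfl⟩
  have hfy : f y ≤ 0 := convexHull_min hS (convex_halfSpace_le f.isLinear 0) hy
  simpa only [Set.mem_ofPred_eq, map_smul, smul_eq_mul] using mul_nonpos_of_nonneg_of_nonpos hc hfy

theorem coneHull_subset_setOf_eq_zero (f : ℝ⁵ →ₗ[ℝ] ℝ) (hS : S ⊆ {v | f v = 0}) :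
    coneHull S ⊆ {v | f v = 0} := fun _ hp =>
  le_antisymm (coneHull_subset_setOf_nonpos f (fun _ hv => (hS hv).le) hp)
    (neg_nonpos.1 (coneHull_subset_setOf_nonpos (-f) (fun _ hv => (neg_eq_zero.2 (hS hv)).le) hp))

end coneHull

theorem sqrt_sq_add_sq_le_of_forall_mul_add_mul_le {u w l : ℝ}
    (h : ∀ a b : ℝ, a ^ 2 + b ^ 2 ≤ 1 → a * u + b * w ≤ l) : √(u ^ 2 + w ^ 2) ≤ l := by
  rcases (Real.sqrt_nonneg (u ^ 2 + w ^ 2)).eq_or_lt with hr | hr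
  · rw [← hr]
    simpa using h 0 0 (by norm_num)
  · have hr2 : √(u ^ 2 + w ^ 2) ^ 2 = u ^ 2 + w ^ 2 := Real.sq_sqrt (by positivity)
    generalize √(u ^ 2 + w ^ 2) = r at hr hr2 ⊢
    have hunit : (u / r) ^ 2 + (w / r) ^ 2 ≤ 1 := by
      rw [div_pow, div_pow, ← add_div, ← hr2, div_self (by positivity)]
    calc r = u / r * u + w / r * w := by field_simp; linarith
      _ ≤ l := h _ _ hunit

/-- The homogenization `(l, x, y, z, t) ↦ a x + b y - (1 + b) l` of the tangent half-space
`a x + b (y - 1) ≤ 1` of `D`. -/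
noncomputable def tangentForm (a b : ℝ) : ℝ⁵ →ₗ[ℝ] ℝ :=
  a • EuclideanSpace.projₗ 1 + b • EuclideanSpace.projₗ 2 -
    (1 + b) • EuclideanSpace.projₗ 0

@[simp]
theorem tangentForm_apply (a b : ℝ) (v : ℝ⁵) :
    tangentForm a b v = a * v 1 + b * v 2 - (1 + b) * v 0 := by
  simp [tangentForm]

variable {a b : ℝ}

theorem diskD_subset_tangentForm_nonpos (hab : a ^ 2 + b ^ 2 ≤ 1) :
    diskD ⊆ {v | tangentForm a b v ≤ 0} := by
  rintro v ⟨hv0, hvD, -, -⟩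
  simp only [Set.mem_ofPred_eq, tangentForm_apply, hv0]
  nlinarith [sq_nonneg (a - v 1), sq_nonneg (b - (v 2 - 1))]

theorem setD1_subset_tangentForm_nonpos (ha : a ≤ 0) (hb : b ^ 2 ≤ 1) :
    setD1 ⊆ {v | tangentForm a b v ≤ 0} := by
  rintro v ⟨hv0, -, hx, hy0, hy1, -, -⟩
  simp only [Set.mem_ofPred_eq, tangentForm_apply, hv0]
  nlinarith [mul_nonpos_of_nonpos_of_nonneg ha hx, sq_nonneg (b * (1 - v 2) + 1),
    mul_nonneg (sub_nonneg.2 hy1) (sub_nonneg.2 hy1)]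

theorem setD2_subset_tangentForm_nonpos (ha : 0 ≤ a) (hb : b ^ 2 ≤ 1) :
    setD2 ⊆ {v | tangentForm a b v ≤ 0} := by
  rintro v ⟨hv0, -, hx, hy0, hy1, -, -⟩
  simp only [Set.mem_ofPred_eq, tangentForm_apply, hv0]
  nlinarith [mul_nonpos_of_nonneg_of_nonpos ha hx, sq_nonneg (b * (1 - v 2) + 1),
    mul_nonneg (sub_nonneg.2 hy1) (sub_nonneg.2 hy1)]

theorem mem_coneHull_diskD_of_sqrt_le {p : ℝ⁵} (hp : √((p 1) ^ 2 + (p 2 - p 0) ^ 2) ≤ p 0)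
    (hp3 : p 3 = 0) (hp4 : p 4 = 0) : p ∈ coneHull diskD := by
  obtain ⟨hl, hdisk⟩ := Real.sqrt_le_iff.1 hp
  rcases hl.eq_or_lt with hl | hl
  · have hx : p 1 = 0 := by nlinarith
    have hy : p 2 = 0 := by nlinarith
    have hzero : p = (0 : ℝ) • !₂[1, 0, 1, 0, 0] := by
      ext i; fin_cases i <;> simp [← hl, hx, hy, hp3, hp4]
    rw [hzero]
    exact smul_mem_coneHull le_rfl ⟨rfl, by simp, rfl, rfl⟩
  · rw [← smul_inv_smul₀ hl.ne' p]
    refine smul_mem_coneHull hl.le ⟨inv_mul_cancel₀ hl.ne', ?_, by simp [hp3], by simp [hp4]⟩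
    have hy : (p 0)⁻¹ * p 2 - 1 = (p 0)⁻¹ * (p 2 - p 0) := by field_simp
    simp only [PiLp.smul_apply, smul_eq_mul, hy, mul_pow, ← mul_add]
    calc ((p 0)⁻¹) ^ 2 * ((p 1) ^ 2 + (p 2 - p 0) ^ 2) ≤ ((p 0)⁻¹) ^ 2 * (p 0) ^ 2 := by gcongr
      _ = 1 := by field_simp

/-- Proposition 4.4: with `F = cone D`, `F₁ = cone(D₁ ∪ D)` and `F₂ = cone(D₂ ∪ D)`,
we have `F₁ ∩ F₂ = F`. -/
theorem stmt18 :
    coneHull (setD1 ∪ diskD) ∩ coneHull (setD2 ∪ diskD) = coneHull diskD := by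
  refine subset_antisymm ?_ (Set.subset_inter (coneHull_mono Set.subset_union_right)
    (coneHull_mono Set.subset_union_right))
  rintro p ⟨h1, h2⟩
  have htangent : ∀ a b : ℝ, a ^ 2 + b ^ 2 ≤ 1 → tangentForm a b p ≤ 0 := fun a b hab => by
    have hb : b ^ 2 ≤ 1 := by nlinarith [sq_nonneg a]
    rcases le_total a 0 with ha | ha
    · exact coneHull_subset_setOf_nonpos _ (Set.union_subset
        (setD1_subset_tangentForm_nonpos ha hb) (diskD_subset_tangentForm_nonpos hab)) h1
    · exact coneHull_subset_setOf_nonpos _ (Set.union_subset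
        (setD2_subset_tangentForm_nonpos ha hb) (diskD_subset_tangentForm_nonpos hab)) h2
  have hcoord : ∀ i : Fin 5, (setD1 ∪ diskD) ⊆ {v | v i = 0} → p i = 0 := fun i hi =>
    coneHull_subset_setOf_eq_zero (EuclideanSpace.projₗ i) (by simpa using hi) h1
  refine mem_coneHull_diskD_of_sqrt_le (sqrt_sq_add_sq_le_of_forall_mul_add_mul_le
    fun a b hab => by linarith [tangentForm_apply a b p ▸ htangent a b hab]) ?_ ?_
  · exact hcoord 3 (by rintro v (⟨-, -, -, -, -, h, -⟩ | ⟨-, -, h, -⟩) <;> exact h)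
  · exact hcoord 4 (by rintro v (⟨-, -, -, -, -, -, h⟩ | ⟨-, -, -, h⟩) <;> exact h)
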